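/- Let l, b, c be complex matrices of sizes p×p, p×(q−p), p×p respectively, with l lower triangular with positive diagonal and c + c* = b b*. Set S(l,b,c) to be the (p+q)×(p+q) block matrix with rows (l, b, c l^{*-1}), (0, I_{q−p}, b* l^{*-1}), (0, 0, l^{*-1}). Then cosh Rad(S(l,b,c)) = (1/2)·SingVal(l + l^{*-1} + c l^{*-1}), where Rad is the radial part in the Cartan decomposition of the corresponding element of SU(p,q). -/

import Mathlib

open Matrix

noncomputable section

/-- Index type for the basis splitting `(p, q-p, p)` of `ℂ^{p+q}`. -/
abbrev Idx (p q : ℕ) := Fin p ⊕ (Fin (q - p) ⊕ Fin p)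

/-- The quadratic form `J` of signature `(p,q)` in the splitting `(p, q-p, p)`. -/
def formJ (p q : ℕ) : Matrix (Idx p q) (Idx p q) ℂ :=
  Matrix.fromBlocks 1 0 0 (-1)

/-- The element `S(l,b,c)` of the solvable group `S = NA`. -/
def solvS (p q : ℕ) (l : Matrix (Fin p) (Fin p) ℂ) (b : Matrix (Fin p) (Fin (q - p)) ℂ)
    (c : Matrix (Fin p) (Fin p) ℂ) : Matrix (Idx p q) (Idx p q) ℂ :=
  Matrix.of fun i j =>
    match i, j with
    | Sum.inl a, Sum.inl a' => l a a'
    | Sum.inl a, Sum.inr (Sum.inl a') => b a a'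
    | Sum.inl a, Sum.inr (Sum.inr a') => (c * (lᴴ)⁻¹) a a'
    | Sum.inr (Sum.inl a), Sum.inr (Sum.inl a') => if a = a' then 1 else 0
    | Sum.inr (Sum.inl a), Sum.inr (Sum.inr a') => (bᴴ * (lᴴ)⁻¹) a a'
    | Sum.inr (Sum.inr a), Sum.inr (Sum.inr a') => (lᴴ)⁻¹ a a'
    | _, _ => 0

/-- The change-of-basis matrix `P` conjugating the group `G` into `SU(p,q)`. -/
def basisP (p q : ℕ) : Matrix (Idx p q) (Idx p q) ℂ :=
  Matrix.of fun i j =>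
    match i, j with
    | Sum.inl a, Sum.inl a' => if a = a' then 1 / (Real.sqrt 2 : ℂ) else 0
    | Sum.inl a, Sum.inr (Sum.inr a') => if a = a' then 1 / (Real.sqrt 2 : ℂ) else 0
    | Sum.inr (Sum.inr a), Sum.inl a' => if a = a' then 1 / (Real.sqrt 2 : ℂ) else 0
    | Sum.inr (Sum.inr a), Sum.inr (Sum.inr a') => if a = a' then -(1 / (Real.sqrt 2 : ℂ)) else 0
    | Sum.inr (Sum.inl a), Sum.inr (Sum.inl a') => if a = a' then 1 else 0
    | _, _ => 0

/-- The Cartan torus element `D_p(r)` in the splitting `(p, q-p, p)`. -/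
def cartanD' (p q : ℕ) (r : Fin p → ℝ) : Matrix (Idx p q) (Idx p q) ℂ :=
  Matrix.of fun i j =>
    match i, j with
    | Sum.inl a, Sum.inl a' => if a = a' then (Real.cosh (r a) : ℂ) else 0
    | Sum.inl a, Sum.inr (Sum.inr a') => if a = a' then (Real.sinh (r a) : ℂ) else 0
    | Sum.inr (Sum.inr a), Sum.inl a' => if a = a' then (Real.sinh (r a) : ℂ) else 0
    | Sum.inr (Sum.inr a), Sum.inr (Sum.inr a') => if a = a' then (Real.cosh (r a) : ℂ) else 0
    | Sum.inr (Sum.inl a), Sum.inr (Sum.inl a') => if a = a' then 1 else 0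
    | _, _ => 0


open Polynomial

section Helpers
variable {n : Type*} [Fintype n] [DecidableEq n] {R : Type*} [CommRing R]

theorem my_charpoly_conj (U V M : Matrix n n R) (hUV : U * V = 1) (hVU : V * U = 1) :
    (U * M * V).charpoly = M.charpoly := by
  have hmap : ∀ A B : Matrix n n R, (A * B).map (C : R → R[X]) = A.map C * B.map C := by
    intro A B
    exact Matrix.map_mul
  have key : charmatrix (U * M * V) = U.map C * charmatrix M * V.map C := by
    unfold charmatrix
    simp only [RingHom.mapMatrix_apply]
    rw [mul_sub, sub_mul, ← hmap, ← hmap, mul_assoc, mul_assoc]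
    congr 1
    rw [(scalar_commute (X : R[X]) (Commute.all _) (V.map C)).eq, ← mul_assoc, ← hmap, hUV]
    simp
  rw [Matrix.charpoly, key, det_mul, det_mul, Matrix.charpoly]
  rw [mul_comm ((U.map C).det * (charmatrix M).det), ← mul_assoc, ← det_mul, ← hmap, hVU]
  simp

theorem my_charpoly_diagonal (d : n → R) :
    (Matrix.diagonal d).charpoly = ∏ i, (X - C (d i)) := by
  have : charmatrix (Matrix.diagonal d) = Matrix.diagonal fun i => X - C (d i) := by
    ext i j
    rcases eq_or_ne i j with rfl | h
    · simp
    · simp [h, charmatrix_apply_ne _ _ _ h]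
  rw [Matrix.charpoly, this, det_diagonal]

theorem my_roots_charpoly_diagonal (d : n → ℂ) :
    (Matrix.diagonal d).charpoly.roots = Multiset.map d Finset.univ.val := by
  rw [my_charpoly_diagonal]
  have : (∏ i, (X - C (d i))) = ((Finset.univ.val.map d).map fun a => X - C a).prod := by
    rw [Multiset.map_map]
    rfl
  rw [this, roots_multiset_prod_X_sub_C]

end Helpers

lemma sqrt2_sq : ((Real.sqrt 2 : ℝ) : ℂ) * ((Real.sqrt 2 : ℝ) : ℂ) = 2 := by
  norm_cast
  rw [Real.mul_self_sqrt (by norm_num)]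

lemma inv_sqrt2_sq : (1 / (Real.sqrt 2 : ℂ)) * (1 / (Real.sqrt 2 : ℂ)) = 1 / 2 := by
  rw [div_mul_div_comm, sqrt2_sq]
  norm_num

lemma basisP_mul_self (p q : ℕ) : basisP p q * basisP p q = 1 := by
  have h2 := inv_sqrt2_sq
  ext i j
  rcases i with i | i | i <;> rcases j with j | j | j <;>
    simp only [mul_apply, Fintype.sum_sum_type, basisP, Matrix.of_apply, one_apply, ite_mul,
      mul_ite, zero_mul, mul_zero, Finset.sum_ite_eq, Finset.sum_ite_eq', Finset.mem_univ,
      if_true, Finset.sum_const_zero, add_zero, zero_add, mul_one, one_mul, mul_neg, neg_mul,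
      neg_neg, Sum.inl.injEq, Sum.inr.injEq, reduceCtorEq, if_false] <;>
  first
  | (rcases eq_or_ne i j with rfl | h
     · simp only [if_pos rfl]; rw [h2]; ring_nf; try norm_num
     · simp [h, Ne.symm h])
  | rfl
  | simp

lemma PSP_entry (p q : ℕ) (l : Matrix (Fin p) (Fin p) ℂ) (b : Matrix (Fin p) (Fin (q - p)) ℂ)
    (c : Matrix (Fin p) (Fin p) ℂ) (i j : Fin p) :
    (basisP p q * solvS p q l b c * basisP p q) (Sum.inl i) (Sum.inl j) =
      (1 / 2) * ((l + (lᴴ)⁻¹ + c * (lᴴ)⁻¹) i j) := by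
  have h2 := inv_sqrt2_sq
  simp only [mul_apply, Fintype.sum_sum_type, basisP, solvS, Matrix.of_apply, ite_mul, mul_ite,
    zero_mul, mul_zero, Finset.sum_ite_eq, Finset.sum_ite_eq', Finset.mem_univ, if_true,
    Finset.sum_const_zero, add_zero, zero_add, mul_one, one_mul, mul_neg, neg_mul, neg_neg,
    Finset.sum_add_distrib, Finset.mul_sum, Finset.sum_mul]
  simp only [Matrix.add_apply, Matrix.mul_apply]
  rw [add_mul, Finset.sum_mul]
  ring_nf
  have hs : ((Real.sqrt 2 : ℝ) : ℂ)⁻¹ * ((Real.sqrt 2 : ℝ) : ℂ)⁻¹ = 1 / 2 := by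
    simpa [one_div] using h2
  have key : ∀ x : ℂ, ((Real.sqrt 2 : ℝ) : ℂ)⁻¹ * x * ((Real.sqrt 2 : ℝ) : ℂ)⁻¹ = (1 / 2) * x := by
    intro x; rw [mul_right_comm, hs]
  simp_rw [mul_assoc]
  have hsq : ((Real.sqrt 2 : ℝ) : ℂ)⁻¹ ^ 2 = 1 / 2 := by rw [sq, hs]
  rw [hsq, ← Finset.mul_sum]
  ring

lemma kDk_entry (p q : ℕ) (ρ : Fin p → ℝ) (K1 K1' : Matrix (Fin p) (Fin p) ℂ)
    (K4 K4' : Matrix (Fin (q - p) ⊕ Fin p) (Fin (q - p) ⊕ Fin p) ℂ) (i j : Fin p) :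
    (Matrix.fromBlocks K1 0 0 K4 * cartanD' p q ρ * Matrix.fromBlocks K1' 0 0 K4')
        (Sum.inl i) (Sum.inl j) =
      (K1 * Matrix.diagonal (fun a => (Real.cosh (ρ a) : ℂ)) * K1') i j := by
  simp only [mul_apply, Fintype.sum_sum_type, Matrix.fromBlocks_apply₁₁,
    Matrix.fromBlocks_apply₁₂, Matrix.fromBlocks_apply₂₁, Matrix.fromBlocks_apply₂₂,
    cartanD', Matrix.of_apply, Matrix.zero_apply, Matrix.diagonal_apply, ite_mul, mul_ite,
    zero_mul, mul_zero, Finset.sum_ite_eq, Finset.sum_ite_eq', Finset.mem_univ, if_true,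
    Finset.sum_const_zero, add_zero, zero_add]

/-- `cosh Rad(S(l,b,c)) = ½ SingVal(l + l^{*-1} + c l^{*-1})`: if the conjugate
`P S(l,b,c) P⁻¹ ∈ SU(p,q)` has Cartan decomposition with radial part `ρ` in the closed Weyl
chamber, then the eigenvalues of `N Nᴴ`, where `N = l + l^{*-1} + c l^{*-1}`, are the
`(2 cosh ρᵢ)²`. -/
theorem cosh_rad_of_solvable_element (p q : ℕ) (hpq : p ≤ q)
    (l : Matrix (Fin p) (Fin p) ℂ) (b : Matrix (Fin p) (Fin (q - p)) ℂ)
    (c : Matrix (Fin p) (Fin p) ℂ)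
    (hlow : ∀ i j : Fin p, i < j → l i j = 0)
    (hdiag : ∀ i : Fin p, 0 < (l i i).re ∧ (l i i).im = 0)
    (hc : c + cᴴ = b * bᴴ)
    (k₁ k₂ : Matrix (Idx p q) (Idx p q) ℂ)
    (ρ : Fin p → ℝ) (hρ : ∀ i j : Fin p, i ≤ j → ρ j ≤ ρ i) (hρ0 : ∀ i, 0 ≤ ρ i)
    (hk₁ : ∃ (K1 : Matrix (Fin p) (Fin p) ℂ)
        (K4 : Matrix (Fin (q - p) ⊕ Fin p) (Fin (q - p) ⊕ Fin p) ℂ),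
      K1ᴴ * K1 = 1 ∧ K4ᴴ * K4 = 1 ∧ k₁ = Matrix.fromBlocks K1 0 0 K4 ∧ k₁.det = 1)
    (hk₂ : ∃ (K1 : Matrix (Fin p) (Fin p) ℂ)
        (K4 : Matrix (Fin (q - p) ⊕ Fin p) (Fin (q - p) ⊕ Fin p) ℂ),
      K1ᴴ * K1 = 1 ∧ K4ᴴ * K4 = 1 ∧ k₂ = Matrix.fromBlocks K1 0 0 K4 ∧ k₂.det = 1)
    (hCartan : basisP p q * solvS p q l b c * (basisP p q)⁻¹ = k₁ * cartanD' p q ρ * k₂) :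
    ((l + (lᴴ)⁻¹ + c * (lᴴ)⁻¹) * (l + (lᴴ)⁻¹ + c * (lᴴ)⁻¹)ᴴ).charpoly.roots =
      Multiset.map (fun i : Fin p => ((2 * Real.cosh (ρ i) : ℂ)) ^ 2) Finset.univ.val := by
  classical
  obtain ⟨K1a, K4a, hK1a, hK4a, hk1eq, -⟩ := hk₁
  obtain ⟨K1b, K4b, hK1b, hK4b, hk2eq, -⟩ := hk₂
  have hPinv : (basisP p q)⁻¹ = basisP p q := Matrix.inv_eq_right_inv (basisP_mul_self p q)
  rw [hPinv, hk1eq, hk2eq] at hCartan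
  have hN : (l + (lᴴ)⁻¹ + c * (lᴴ)⁻¹) =
      K1a * ((2 : ℂ) • Matrix.diagonal (fun a => (Real.cosh (ρ a) : ℂ))) * K1b := by
    ext i j
    have h1 := PSP_entry p q l b c i j
    rw [hCartan, kDk_entry] at h1
    rw [Matrix.mul_smul, Matrix.smul_mul, Matrix.smul_apply, h1, smul_eq_mul]
    ring
  have hK1b' : K1b * K1bᴴ = 1 := mul_eq_one_comm.mp hK1b
  have hK1a' : K1a * K1aᴴ = 1 := mul_eq_one_comm.mp hK1a
  have hCH : ((2 : ℂ) • Matrix.diagonal (fun a => (Real.cosh (ρ a) : ℂ)))ᴴ =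
      (2 : ℂ) • Matrix.diagonal (fun a => (Real.cosh (ρ a) : ℂ)) := by
    ext a b'
    simp only [Matrix.conjTranspose_apply, Matrix.smul_apply, Matrix.diagonal_apply,
      smul_eq_mul, mul_ite, mul_zero, star_mul']
    rcases eq_or_ne a b' with rfl | h
    · simp [← Complex.cosh_conj, Complex.conj_ofReal, mul_comm]
    · simp [h, Ne.symm h]
  have hNN : (l + (lᴴ)⁻¹ + c * (lᴴ)⁻¹) * (l + (lᴴ)⁻¹ + c * (lᴴ)⁻¹)ᴴ =
      K1a * (((2 : ℂ) • Matrix.diagonal (fun a => (Real.cosh (ρ a) : ℂ))) *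
        ((2 : ℂ) • Matrix.diagonal (fun a => (Real.cosh (ρ a) : ℂ)))) * K1aᴴ := by
    rw [hN]
    rw [Matrix.conjTranspose_mul, Matrix.conjTranspose_mul, hCH]
    calc K1a * ((2 : ℂ) • Matrix.diagonal (fun a => (Real.cosh (ρ a) : ℂ))) * K1b *
          (K1bᴴ * (((2 : ℂ) • Matrix.diagonal (fun a => (Real.cosh (ρ a) : ℂ))) * K1aᴴ))
        = K1a * ((2 : ℂ) • Matrix.diagonal (fun a => (Real.cosh (ρ a) : ℂ))) * (K1b * K1bᴴ) *
            ((2 : ℂ) • Matrix.diagonal (fun a => (Real.cosh (ρ a) : ℂ))) * K1aᴴ := by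
          noncomm_ring
      _ = K1a * (((2 : ℂ) • Matrix.diagonal (fun a => (Real.cosh (ρ a) : ℂ))) *
            ((2 : ℂ) • Matrix.diagonal (fun a => (Real.cosh (ρ a) : ℂ)))) * K1aᴴ := by
          rw [hK1b']; noncomm_ring
  have hdiag4 : ((2 : ℂ) • Matrix.diagonal (fun a => (Real.cosh (ρ a) : ℂ))) *
      ((2 : ℂ) • Matrix.diagonal (fun a => (Real.cosh (ρ a) : ℂ))) =
      Matrix.diagonal (fun a => ((2 * Real.cosh (ρ a) : ℂ)) ^ 2) := by
    rw [Matrix.smul_mul, Matrix.mul_smul, smul_smul, Matrix.diagonal_mul_diagonal,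
      ← Matrix.diagonal_smul]
    refine congrArg Matrix.diagonal (funext fun a => ?_)
    show (2 * 2 : ℂ) • ((Real.cosh (ρ a) : ℂ) * (Real.cosh (ρ a) : ℂ)) = _
    rw [smul_eq_mul]
    ring
  rw [hNN, hdiag4, my_charpoly_conj K1a K1aᴴ _ hK1a' hK1a, my_roots_charpoly_diagonal]

end
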